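/- Let p̃, q̃ be integers with p̃ ≠ 0 and q̃ ≥ 97·|p̃|, and let u and u′ be two distinct complex roots of the quartic equation u⁴ + 8u² − 12·i·u − 4 = 0. Then the open discs {t ∈ ℂ : |t − c(u)| < 51·|p̃|³/q̃} and {t ∈ ℂ : |t − c(u′)| < 51·|p̃|³/q̃} are disjoint. -/

import Mathlib

/-!
Since `c(u) - c(u') = (u - u') (p̃ q̃ - (1 + i(u + u'))/2 · p̃²)`, it suffices to bound the roots
of the quartic `f(u) = u⁴ + 8u² - 12iu - 4` from above (`|u| ≤ 3.45`, Cauchy's bound) and their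
mutual distances from below (`|u - u'| ≥ 0.0117`); then `|c(u) - c(u')| ≥ 102|p̃|³/q̃` once
`q̃ ≥ 97|p̃|`, which is the sum of the two radii.

The separation comes from `f'(u) = (u - u') (6u² + 8 - 4u(u - u') + (u - u')²)` for distinct
roots, together with a Bézout cofactor `B` of `f'` modulo `f`, `B f' ≡ -688`: multiplying the
first identity by `B(u)` turns it into `688 = |u - u'| · |…|`, and after reducing modulo `f` the
bracket is bounded by a cubic in `|u|`.
-/

open Complex

/-- The center `c(u) = i q̃² + u p̃ q̃ − ((u + i u²)/2) p̃²` of the asymptotic disc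
associated with a root `u` of the quartic `u⁴ + 8u² − 12iu − 4 = 0`. -/
noncomputable def discCenter (p' q' : ℤ) (u : ℂ) : ℂ :=
  Complex.I * (q' : ℂ) ^ 2 + u * (p' : ℂ) * (q' : ℂ)
    - ((u + Complex.I * u ^ 2) / 2) * (p' : ℂ) ^ 2

theorem norm_cubic_le {E : Type*} [NormedRing E] [NormOneClass E] (a b c d z : E) {R : ℝ}
    (hz : ‖z‖ ≤ R) :
    ‖a * z ^ 3 + b * z ^ 2 + c * z + d‖ ≤ ‖a‖ * R ^ 3 + ‖b‖ * R ^ 2 + ‖c‖ * R + ‖d‖ := by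
  have h0 : 0 ≤ ‖z‖ := norm_nonneg z
  have hpow (n : ℕ) : ‖z ^ n‖ ≤ R ^ n := (norm_pow_le z n).trans (pow_le_pow_left₀ h0 hz n)
  calc ‖a * z ^ 3 + b * z ^ 2 + c * z + d‖
      ≤ ‖a * z ^ 3‖ + ‖b * z ^ 2‖ + ‖c * z‖ + ‖d‖ := norm_add₄_le
    _ ≤ ‖a‖ * ‖z ^ 3‖ + ‖b‖ * ‖z ^ 2‖ + ‖c‖ * ‖z‖ + ‖d‖ := by
        gcongr <;> exact norm_mul_le _ _
    _ ≤ ‖a‖ * R ^ 3 + ‖b‖ * R ^ 2 + ‖c‖ * R + ‖d‖ := by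
        gcongr
        · exact hpow 3
        · exact hpow 2

/-- The Bézout cofactor `B` of `f'` modulo `f = u⁴ + 8u² - 12iu - 4`: `B f' ≡ -688 (mod f)`. -/
def quarticCofactor (u : ℂ) : ℂ :=
  4 * u ^ 3 - 48 * I * u ^ 2 + 144 * u - 228 * I

namespace QuarticRoot

variable {u u' : ℂ}

theorem norm_le (hu : u ^ 4 + 8 * u ^ 2 - 12 * I * u - 4 = 0) : ‖u‖ ≤ 69 / 20 := by
  have hpow : ‖u‖ ^ 4 ≤ 8 * ‖u‖ ^ 2 + 12 * ‖u‖ + 4 := by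
    have h := norm_cubic_le 0 (-8) (12 * I) 4 u le_rfl
    rw [show (0 : ℂ) * u ^ 3 + -8 * u ^ 2 + 12 * I * u + 4 = u ^ 4 by
      linear_combination -hu] at h
    simpa using h
  nlinarith [norm_nonneg u, sq_nonneg (‖u‖ ^ 2 - 10)]

theorem cofactor_mul_deriv (hu : u ^ 4 + 8 * u ^ 2 - 12 * I * u - 4 = 0) :
    quarticCofactor u * (4 * u ^ 3 + 16 * u - 12 * I) = -688 := by
  unfold quarticCofactor
  linear_combination (16 * u ^ 2 - 192 * I * u + 512) * hu + (2736 - 1728 * u ^ 2) * I_sq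

theorem deriv_eq_sub_mul (hu : u ^ 4 + 8 * u ^ 2 - 12 * I * u - 4 = 0)
    (hu' : u' ^ 4 + 8 * u' ^ 2 - 12 * I * u' - 4 = 0) (hne : u ≠ u') :
    4 * u ^ 3 + 16 * u - 12 * I
      = (u - u') * (6 * u ^ 2 + 8 - 4 * u * (u - u') + (u - u') ^ 2) := by
  have hdiffQuot : u ^ 3 + u ^ 2 * u' + u * u' ^ 2 + u' ^ 3 + 8 * (u + u') - 12 * I = 0 := by
    refine (mul_eq_zero.mp ?_).resolve_left (sub_ne_zero.mpr hne)
    linear_combination hu - hu'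
  linear_combination hdiffQuot

theorem norm_cofactor_le (hu : u ^ 4 + 8 * u ^ 2 - 12 * I * u - 4 = 0) :
    ‖quarticCofactor u‖ ≤ 1461 := by
  have h := norm_cubic_le 4 (-48 * I) 144 (-228 * I) u (norm_le hu)
  rw [show (4 : ℂ) * u ^ 3 + -48 * I * u ^ 2 + 144 * u + -228 * I = quarticCofactor u by
    unfold quarticCofactor; ring] at h
  refine h.trans ?_
  norm_num

theorem norm_cofactor_mul_four_mul_le (hu : u ^ 4 + 8 * u ^ 2 - 12 * I * u - 4 = 0) :
    ‖quarticCofactor u * (4 * u)‖ ≤ 15765 := by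
  have h := norm_cubic_le (-192 * I) 448 (-720 * I) 64 u (norm_le hu)
  rw [show -192 * I * u ^ 3 + 448 * u ^ 2 + -720 * I * u + 64 = quarticCofactor u * (4 * u) by
    unfold quarticCofactor; linear_combination -16 * hu] at h
  refine h.trans ?_
  norm_num

theorem norm_cofactor_mul_quadratic_le (hu : u ^ 4 + 8 * u ^ 2 - 12 * I * u - 4 = 0) :
    ‖quarticCofactor u * (6 * u ^ 2 + 8)‖ ≤ 58112 := by
  have h := norm_cubic_le 704 (840 * I) 4704 (-2976 * I) u (norm_le hu)
  rw [show 704 * u ^ 3 + 840 * I * u ^ 2 + 4704 * u + -2976 * I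
      = quarticCofactor u * (6 * u ^ 2 + 8) by
    unfold quarticCofactor
    linear_combination (-(24 * u) + 288 * I) * hu + 3456 * u * I_sq] at h
  refine h.trans ?_
  norm_num

theorem le_norm_sub (hu : u ^ 4 + 8 * u ^ 2 - 12 * I * u - 4 = 0)
    (hu' : u' ^ 4 + 8 * u' ^ 2 - 12 * I * u' - 4 = 0) (hne : u ≠ u') :
    117 / 10000 ≤ ‖u - u'‖ := by
  by_contra! hlt
  set B := quarticCofactor u
  set δ := ‖u - u'‖
  have hδ : 0 ≤ δ := norm_nonneg _
  have hid : (u - u') * (B * (6 * u ^ 2 + 8) - (u - u') * (B * (4 * u)) + (u - u') ^ 2 * B)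
      = -688 := by
    linear_combination -B * deriv_eq_sub_mul hu hu' hne + cofactor_mul_deriv hu
  have h688 : 688 = δ * ‖B * (6 * u ^ 2 + 8) - (u - u') * (B * (4 * u)) + (u - u') ^ 2 * B‖ := by
    simpa [norm_mul] using (congrArg norm hid).symm
  have hbound : ‖B * (6 * u ^ 2 + 8) - (u - u') * (B * (4 * u)) + (u - u') ^ 2 * B‖
      ≤ 58112 + δ * 15765 + δ ^ 2 * 1461 := by
    calc _ ≤ ‖B * (6 * u ^ 2 + 8)‖ + ‖(u - u') * (B * (4 * u))‖ + ‖(u - u') ^ 2 * B‖ :=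
          (norm_add_le _ _).trans (add_le_add_left (norm_sub_le _ _) _)
      _ = ‖B * (6 * u ^ 2 + 8)‖ + δ * ‖B * (4 * u)‖ + δ ^ 2 * ‖B‖ := by
          rw [norm_mul (u - u'), norm_mul ((u - u') ^ 2), norm_pow]
      _ ≤ 58112 + δ * 15765 + δ ^ 2 * 1461 := by
          gcongr
          exacts [norm_cofactor_mul_quadratic_le hu, norm_cofactor_mul_four_mul_le hu,
            norm_cofactor_le hu]
  nlinarith [mul_le_mul_of_nonneg_left hbound hδ, mul_nonneg hδ hδ]

end QuarticRoot

theorem discCenter_sub (p' q' : ℤ) (u u' : ℂ) :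
    discCenter p' q' u - discCenter p' q' u'
      = (u - u') * (p' * q' - (1 + I * (u + u')) / 2 * (p' : ℂ) ^ 2) := by
  unfold discCenter
  ring

theorem sub_mul_le_norm_discCenter_sub {p' q' : ℤ} (hq : 0 ≤ q') {u u' : ℂ}
    (hu : ‖u‖ ≤ 69 / 20) (hu' : ‖u'‖ ≤ 69 / 20) :
    ‖u - u'‖ * (|(p' : ℝ)| * q' - 79 / 20 * |(p' : ℝ)| ^ 2)
      ≤ ‖discCenter p' q' u - discCenter p' q' u'‖ := by
  rw [discCenter_sub, norm_mul]
  gcongr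
  have hpq : ‖(p' : ℂ) * q'‖ = |(p' : ℝ)| * q' := by
    rw [norm_mul, Complex.norm_intCast, Complex.norm_intCast, abs_of_nonneg (Int.cast_nonneg hq)]
  have hsum : ‖1 + I * (u + u')‖ ≤ 79 / 10 := by
    calc ‖1 + I * (u + u')‖ ≤ 1 + (‖u‖ + ‖u'‖) := by
          refine (norm_add_le _ _).trans ?_
          rw [norm_one, norm_mul, norm_I, one_mul]
          gcongr
          exact norm_add_le _ _
      _ ≤ 79 / 10 := by linarith
  have hw : ‖(1 + I * (u + u')) / 2 * (p' : ℂ) ^ 2‖ ≤ 79 / 20 * |(p' : ℝ)| ^ 2 := by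
    rw [norm_mul, norm_div, norm_pow, Complex.norm_intCast, Complex.norm_two]
    exact mul_le_mul_of_nonneg_right (by linarith) (sq_nonneg _)
  calc |(p' : ℝ)| * q' - 79 / 20 * |(p' : ℝ)| ^ 2
      ≤ ‖(p' : ℂ) * q'‖ - ‖(1 + I * (u + u')) / 2 * (p' : ℂ) ^ 2‖ := by linarith
    _ ≤ _ := norm_sub_norm_le _ _

theorem stmt_9_general (p' q' : ℤ) (hq : 97 * |p'| ≤ q') (u u' : ℂ)
    (hu : u ^ 4 + 8 * u ^ 2 - 12 * Complex.I * u - 4 = 0)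
    (hu' : u' ^ 4 + 8 * u' ^ 2 - 12 * Complex.I * u' - 4 = 0)
    (hne : u ≠ u') :
    ∀ t : ℂ, ¬(‖t - discCenter p' q' u‖ < 51 * |(p' : ℝ)| ^ 3 / (q' : ℝ) ∧
      ‖t - discCenter p' q' u'‖ < 51 * |(p' : ℝ)| ^ 3 / (q' : ℝ)) := by
  set P : ℝ := |(p' : ℝ)|
  have hP : 0 ≤ P := abs_nonneg _
  have hPq : 97 * P ≤ q' := by simp only [P, ← Int.cast_abs]; exact_mod_cast hq
  have hq0 : (0 : ℝ) ≤ q' := by linarith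
  have hradii : 51 * P ^ 3 / q' + 51 * P ^ 3 / q'
      ≤ dist (discCenter p' q' u) (discCenter p' q' u') := by
    rw [dist_eq_norm]
    calc 51 * P ^ 3 / q' + 51 * P ^ 3 / q' = 102 * P ^ 3 / q' := by ring
      _ ≤ 117 / 10000 * (P * q' - 79 / 20 * P ^ 2) := by
          refine div_le_of_le_mul₀ hq0 (by nlinarith) ?_
          nlinarith [mul_nonneg (mul_nonneg hP hP) (sub_nonneg.2 hPq),
            mul_nonneg hP (mul_nonneg (sub_nonneg.2 hPq) (sub_nonneg.2 hPq))]
      _ ≤ ‖u - u'‖ * (P * q' - 79 / 20 * P ^ 2) := by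
          gcongr
          · nlinarith
          · exact QuarticRoot.le_norm_sub hu hu' hne
      _ ≤ _ := sub_mul_le_norm_discCenter_sub (by exact_mod_cast hq0)
          (QuarticRoot.norm_le hu) (QuarticRoot.norm_le hu')
  rintro t ⟨ht, ht'⟩
  rw [← dist_eq_norm] at ht ht'
  exact Set.disjoint_left.mp (Metric.ball_disjoint_ball hradii) ht ht'

/-- For integers `p̃ ≠ 0`, `q̃ ≥ 97|p̃|` and distinct roots `u ≠ u'` of
`u⁴ + 8u² − 12iu − 4 = 0`, the open discs of radius `51|p̃|³/q̃` centered at `c(u)`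
and `c(u')` are disjoint. -/
theorem stmt_9 (p' q' : ℤ) (hp : p' ≠ 0) (hq : 97 * |p'| ≤ q') (u u' : ℂ)
    (hu : u ^ 4 + 8 * u ^ 2 - 12 * Complex.I * u - 4 = 0)
    (hu' : u' ^ 4 + 8 * u' ^ 2 - 12 * Complex.I * u' - 4 = 0)
    (hne : u ≠ u') :
    ∀ t : ℂ, ¬(‖t - discCenter p' q' u‖ < 51 * |(p' : ℝ)| ^ 3 / (q' : ℝ) ∧
      ‖t - discCenter p' q' u'‖ < 51 * |(p' : ℝ)| ^ 3 / (q' : ℝ)) :=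
  stmt_9_general p' q' hq u u' hu hu' hne
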